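/- Let F be a strategyproof 2-facility mechanism on the line with approximation ratio at most ρ. If x is an (i|j,k)-well-separated instance with F_2(x) = x_k, then for every (i|j,k)-well-separated instance x' = (x_i, x'_j, x'_k) with x'_k ≤ x_k, it holds that F_2(x') = x'_k. -/

import Mathlib

/-!
Fix agent `i` at `a = x i` and write `v(b, c)` for the right facility when `j` reports `b` and
`k` reports `c`. In a well-separated instance the social cost is below `b - a`, so `j` and `k`
are both served by `v(b, c)`, and strategyproofness squeezes `b ≤ v(b, c) ≤ c`.

For fixed `b`, agent `k` faces a one-agent strategyproof map `c ↦ v(b, c)` whose values above `b`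
are fixed points, so `v(b, c) = c` propagates to every `y ∈ (b, c]`. For fixed `c`, agent `j`
faces `b ↦ v(b, c)` on the well-separated range `(a + ρ/(ρ+1) (c - a), c)`, and `v(b, c) = c`
for one `b` forces it for all. Alternating the two moves lowers a pinned level `c` to any level
in `(a + ρ/(ρ+1) (c - a), c]`, and iterating reaches every level in `(a, x k]`.
-/

noncomputable section

/-- Cost of an agent at location `a` under a pair of facilities. -/
def fcost (a : ℝ) (y : ℝ × ℝ) : ℝ := min |a - y.1| |a - y.2|

/-- Social cost: sum of the agents' distances to their nearest facility. -/
def scost {n : ℕ} (x : Fin n → ℝ) (y : ℝ × ℝ) : ℝ := ∑ i, fcost (x i) y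

/-- Optimal social cost over all placements of two facilities. -/
def optCost {n : ℕ} (x : Fin n → ℝ) : ℝ := ⨅ y : ℝ × ℝ, scost x y

/-- The mechanism outputs its facilities in increasing order. -/
def Ordered {n : ℕ} (F : (Fin n → ℝ) → ℝ × ℝ) : Prop := ∀ x, (F x).1 ≤ (F x).2

/-- No agent can strictly decrease her cost by misreporting her location. -/
def Strategyproof {n : ℕ} (F : (Fin n → ℝ) → ℝ × ℝ) : Prop :=
  ∀ (x : Fin n → ℝ) (i : Fin n) (y : ℝ),
    fcost (x i) (F x) ≤ fcost (x i) (F (Function.update x i y))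

/-- `F` has approximation ratio (at most) `ρ` for the social cost. -/
def ApproxRatio {n : ℕ} (F : (Fin n → ℝ) → ℝ × ℝ) (ρ : ℝ) : Prop :=
  ∀ x, scost x (F x) ≤ ρ * optCost x

/-- An `(i|j,k)`-well-separated 3-agent instance. -/
def WellSep (ρ : ℝ) (x : Fin 3 → ℝ) (i j k : Fin 3) : Prop :=
  x i < x j ∧ x j < x k ∧ ρ * (x k - x j) < x j - x i

open Set

theorem eq_self_on_Ioc_of_nearest {f : ℝ → ℝ} {b c : ℝ}
    (hle : ∀ t ∈ Ioc b c, f t ≤ t)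
    (hnear : ∀ t ∈ Ioc b c, ∀ t', |t - f t| ≤ |t - f t'|)
    (hfix : ∀ t ∈ Ioc b c, b < f t → f (f t) = f t) (hc : f c = c) :
    ∀ y ∈ Ioc b c, f y = y := by
  intro y ⟨hby, hyc⟩
  set A := {t | t ∈ Icc y c ∧ f t = t}
  have hcA : c ∈ A := ⟨⟨hyc, le_rfl⟩, hc⟩
  have hAbdd : BddBelow A := ⟨y, fun t ht => ht.1.1⟩
  have hyθ : y ≤ sInf A := le_csInf ⟨c, hcA⟩ fun t ht => ht.1.1
  have hdist : ∀ t ∈ Ioc b c, t ≤ sInf A → |t - f t| ≤ sInf A - t := by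
    intro t ht htθ
    have : ∀ α ∈ A, t + |t - f t| ≤ α := fun α hα => by
      have := hnear t ht α
      rw [hα.2, abs_of_nonpos (a := t - α) (by linarith [csInf_le hAbdd hα])] at this
      linarith
    linarith [le_csInf ⟨c, hcA⟩ this]
  -- just below `inf A`, `f` would have to land on a fixed point in `[y, inf A)`
  have hθ : sInf A = y := by
    by_contra hne
    have hyθ' : y < sInf A := lt_of_le_of_ne hyθ (Ne.symm hne)
    set t := (y + sInf A) / 2 with ht_def
    have ht : t ∈ Ioc b c := ⟨by linarith, by linarith [csInf_le hAbdd hcA]⟩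
    have hft : f t ≤ t := hle t ht
    have hyft : y ≤ f t := by
      have := hdist t ht (by linarith)
      rw [abs_of_nonneg (by linarith)] at this
      linarith
    have hftA : f t ∈ A := ⟨⟨hyft, hft.trans ht.2⟩, hfix t ht (by linarith)⟩
    linarith [csInf_le hAbdd hftA]
  have := hdist y ⟨hby, hyc⟩ hθ.ge
  rw [hθ, sub_self] at this
  exact (sub_eq_zero.1 (abs_nonpos_iff.1 this)).symm

theorem eq_on_Ioo_of_nearest {h : ℝ → ℝ} {β c b : ℝ}
    (hlow : ∀ s ∈ Ioo β c, s ≤ h s) (hhigh : ∀ s ∈ Ioo β c, h s ≤ c)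
    (hnear : ∀ t ∈ Ioo β c, ∀ s, |t - h t| ≤ |t - h s|)
    (hb : b ∈ Ioo β c) (hpin : h b = c) :
    ∀ s ∈ Ioo β c, h s = c := by
  set T := {t | t ∈ Ioo β c ∧ h t = c}
  have hbT : b ∈ T := ⟨hb, hpin⟩
  have hTbdd : BddBelow T := ⟨β, fun t ht => ht.1.1.le⟩
  have hθc : sInf T < c := (csInf_le hTbdd hbT).trans_lt hb.2
  have hgap : ∀ s ∈ Ioo β c, h s ≠ c → s + c ≤ 2 * sInf T := by
    intro s hs hne
    have hsc : h s < c := lt_of_le_of_ne (hhigh s hs) hne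
    have : ∀ t ∈ T, (s + c) / 2 ≤ t := fun t ⟨ht, hpt⟩ => by
      have := hnear t ht s
      rw [hpt, abs_of_neg (by linarith [ht.2])] at this
      rcases le_or_gt t (h s) with hts | hts
      · rw [abs_of_nonpos (by linarith)] at this; linarith
      · rw [abs_of_pos (by linarith)] at this; linarith [hlow s hs]
    linarith [le_csInf ⟨b, hbT⟩ this]
  intro s hs
  by_contra hne
  have hs' := hgap s hs hne
  -- `t` lies in the gap `(2 inf T - c, inf T)`, where neither `h t = c` nor `h t ≠ c` is possible
  set t := (3 * sInf T - c) / 2 with ht_def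
  have ht : t ∈ Ioo β c := ⟨by linarith [hs.1], by linarith⟩
  have htT : h t ≠ c := fun hpt => by linarith [csInf_le hTbdd ⟨ht, hpt⟩]
  linarith [hgap t ht htT]

theorem Ioc_subset_of_forall_Ioc_subset {D : Set ℝ} {a c r : ℝ} (hr0 : 0 ≤ r) (hr1 : r < 1)
    (hc : c ∈ D) (hD : ∀ z ∈ D, Ioc (a + r * (z - a)) z ⊆ D) : Ioc a c ⊆ D := by
  intro y ⟨hay, hyc⟩
  have hac : 0 < c - a := by linarith
  -- the slack `r < s` lets the step `hD` apply at the closed ends of the levels below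
  set s := (1 + r) / 2 with hs_def
  have hs0 : 0 ≤ s := by positivity
  have hs1 : s < 1 := by linarith
  have hlevel : ∀ n : ℕ, Icc (a + s ^ n * (c - a)) c ⊆ D := by
    intro n
    induction n with
    | zero =>
      intro w ⟨hw1, hw2⟩
      rw [pow_zero, one_mul, add_sub_cancel] at hw1
      rwa [le_antisymm hw2 hw1]
    | succ n ih =>
      intro w ⟨hw1, hw2⟩
      set z := a + s ^ n * (c - a)
      by_cases hzw : z ≤ w
      · exact ih ⟨hzw, hw2⟩
      have hzc : z ≤ c := by nlinarith [pow_le_one₀ hs0 hs1.le (n := n)]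
      have hza : 0 < s ^ n * (c - a) := mul_pos (pow_pos (by linarith) n) hac
      refine hD z (ih ⟨le_rfl, hzc⟩) ⟨?_, (not_le.1 hzw).le⟩
      rw [pow_succ] at hw1
      nlinarith
  obtain ⟨n, hn⟩ := exists_pow_lt_of_lt_one (div_pos (sub_pos.2 hay) hac) hs1
  refine hlevel n ⟨?_, hyc⟩
  rw [lt_div_iff₀ hac] at hn
  linarith

theorem fcost_nonneg (a : ℝ) (y : ℝ × ℝ) : 0 ≤ fcost a y :=
  le_min (abs_nonneg _) (abs_nonneg _)

theorem fcost_le_fcost_add_abs_sub (t c : ℝ) (y : ℝ × ℝ) : fcost t y ≤ fcost c y + |t - c| := by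
  rw [fcost, fcost, ← min_add_add_right]
  exact min_le_min (abs_sub_le _ _ _ |>.trans_eq (add_comm _ _))
    (abs_sub_le _ _ _ |>.trans_eq (add_comm _ _))

theorem abs_sub_snd_lt_of_le {u v a b : ℝ} (huv : u ≤ v) (hab : a ≤ b)
    (ha : |a - v| < |a - u|) : |b - v| < |b - u| := by
  rw [← sq_lt_sq] at ha ⊢
  nlinarith

theorem fcost_eq_abs_sub_snd {y : ℝ × ℝ} {a b : ℝ} (hy : y.1 ≤ y.2)
    (h : fcost a y + fcost b y < b - a) : fcost b y = |b - y.2| := by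
  refine min_eq_right (not_lt.1 fun hb => ?_)
  rcases le_or_gt |a - y.1| |a - y.2| with ha | ha
  · have : fcost a y + fcost b y = |a - y.1| + |b - y.1| := by
      rw [fcost, fcost, min_eq_left ha, min_eq_left hb.le]
    have := abs_sub_le b y.1 a
    rw [abs_sub_comm y.1 a] at this
    linarith [le_abs_self (b - a)]
  · have hab : a ≤ b := by linarith [fcost_nonneg a y, fcost_nonneg b y]
    exact (abs_sub_snd_lt_of_le hy hab ha).not_gt hb

theorem scost_fin_three (z : Fin 3 → ℝ) (y : ℝ × ℝ) {i j k : Fin 3}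
    (hij : i ≠ j) (hik : i ≠ k) (hjk : j ≠ k) :
    scost z y = fcost (z i) y + fcost (z j) y + fcost (z k) y := by
  fin_cases i <;> fin_cases j <;> fin_cases k <;> simp_all [scost, Fin.sum_univ_three] <;> ring

theorem optCost_le_scost {n : ℕ} (x : Fin n → ℝ) (y : ℝ × ℝ) : optCost x ≤ scost x y :=
  ciInf_le ⟨0, by rintro _ ⟨y', rfl⟩; exact Finset.sum_nonneg fun _ _ => fcost_nonneg _ _⟩ y

def relocate (x : Fin 3 → ℝ) (j k : Fin 3) (b c : ℝ) : Fin 3 → ℝ :=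
  Function.update (Function.update x j b) k c

section Relocate

variable {ρ : ℝ} {x : Fin 3 → ℝ} {i j k : Fin 3} {b c : ℝ}

theorem relocate_apply_of_ne (hij : i ≠ j) (hik : i ≠ k) : relocate x j k b c i = x i := by
  rw [relocate, Function.update_of_ne hik, Function.update_of_ne hij]

theorem relocate_apply_left (hjk : j ≠ k) : relocate x j k b c j = b := by
  rw [relocate, Function.update_of_ne hjk, Function.update_self]

theorem relocate_apply_right : relocate x j k b c k = c := Function.update_self ..

theorem update_relocate_left (hjk : j ≠ k) (b' : ℝ) :
    Function.update (relocate x j k b c) j b' = relocate x j k b' c := by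
  rw [relocate, relocate, Function.update_comm hjk.symm, Function.update_idem]

theorem update_relocate_right (c' : ℝ) :
    Function.update (relocate x j k b c) k c' = relocate x j k b c' :=
  Function.update_idem ..

theorem relocate_self : relocate x j k (x j) (x k) = x := by
  rw [relocate, Function.update_eq_self, Function.update_eq_self]

theorem scost_relocate (hij : i ≠ j) (hik : i ≠ k) (hjk : j ≠ k) (y : ℝ × ℝ) :
    scost (relocate x j k b c) y = fcost (x i) y + fcost b y + fcost c y := by
  rw [scost_fin_three _ _ hij hik hjk, relocate_apply_of_ne hij hik, relocate_apply_left hjk,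
    relocate_apply_right]

theorem optCost_relocate_le_right (hij : i ≠ j) (hik : i ≠ k) (hjk : j ≠ k) :
    optCost (relocate x j k b c) ≤ |c - b| := by
  refine (optCost_le_scost _ (x i, b)).trans ?_
  rw [scost_relocate hij hik hjk]
  have h₁ : fcost (x i) (x i, b) = 0 := by simp [fcost]
  have h₂ : fcost b (x i, b) = 0 := by simp [fcost]
  rw [h₁, h₂, zero_add, zero_add]
  exact min_le_right _ _

theorem optCost_relocate_le_left (hij : i ≠ j) (hik : i ≠ k) (hjk : j ≠ k) :
    optCost (relocate x j k b c) ≤ |b - x i| := by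
  refine (optCost_le_scost _ (x i, c)).trans ?_
  rw [scost_relocate hij hik hjk]
  have h₁ : fcost (x i) (x i, c) = 0 := by simp [fcost]
  have h₂ : fcost c (x i, c) = 0 := by simp [fcost]
  rw [h₁, h₂, zero_add, add_zero]
  exact min_le_left _ _

theorem wellSep_relocate_iff (hij : i ≠ j) (hik : i ≠ k) (hjk : j ≠ k) :
    WellSep ρ (relocate x j k b c) i j k ↔ x i < b ∧ b < c ∧ ρ * (c - b) < b - x i := by
  rw [WellSep, relocate_apply_of_ne hij hik, relocate_apply_left hjk, relocate_apply_right]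

theorem wellSep_relocate_of_le (hρ : 0 ≤ ρ) (hij : i ≠ j) (hik : i ≠ k) (hjk : j ≠ k)
    (hs : WellSep ρ (relocate x j k b c) i j k) {t : ℝ} (hbt : b < t) (htc : t ≤ c) :
    WellSep ρ (relocate x j k b t) i j k := by
  rw [wellSep_relocate_iff hij hik hjk] at hs ⊢
  exact ⟨hs.1, hbt, lt_of_le_of_lt (by gcongr) hs.2.2⟩

theorem wellSep_relocate_iff_mem_Ioo (hρ : 0 ≤ ρ) (hij : i ≠ j) (hik : i ≠ k) (hjk : j ≠ k) :
    WellSep ρ (relocate x j k b c) i j k ↔ b ∈ Ioo (x i + ρ / (ρ + 1) * (c - x i)) c := by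
  have hβ : x i + ρ / (ρ + 1) * (c - x i) < b ↔ ρ * (c - b) < b - x i := by
    rw [div_mul_eq_mul_div, ← lt_sub_iff_add_lt', div_lt_iff₀ (by linarith)]
    constructor <;> intro h <;> linarith
  rw [wellSep_relocate_iff hij hik hjk, mem_Ioo, hβ]
  constructor
  · exact fun ⟨_, hbc, hsep⟩ => ⟨hsep, hbc⟩
  · exact fun ⟨hsep, hbc⟩ => ⟨by nlinarith, hbc, hsep⟩

end Relocate

section Mechanism

variable {F : (Fin 3 → ℝ) → ℝ × ℝ} {ρ : ℝ} {x : Fin 3 → ℝ} {i j k : Fin 3} {b c : ℝ}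

theorem fcost_relocate_eq_abs (hρ : 0 ≤ ρ) (hord : Ordered F) (happ : ApproxRatio F ρ)
    (hij : i ≠ j) (hik : i ≠ k) (hjk : j ≠ k) (hs : WellSep ρ (relocate x j k b c) i j k) :
    fcost b (F (relocate x j k b c)) = |b - (F (relocate x j k b c)).2| ∧
      fcost c (F (relocate x j k b c)) = |c - (F (relocate x j k b c)).2| := by
  obtain ⟨hab, hbc, hsep⟩ := (wellSep_relocate_iff hij hik hjk).1 hs
  have hcost : scost (relocate x j k b c) (F (relocate x j k b c)) < b - x i :=
    calc _ ≤ ρ * optCost (relocate x j k b c) := happ _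
      _ ≤ ρ * |c - b| := mul_le_mul_of_nonneg_left (optCost_relocate_le_right hij hik hjk) hρ
      _ < b - x i := by rwa [abs_of_pos (sub_pos.2 hbc)]
  rw [scost_relocate hij hik hjk] at hcost
  have := fcost_nonneg (x i) (F (relocate x j k b c))
  have := fcost_nonneg b (F (relocate x j k b c))
  have := fcost_nonneg c (F (relocate x j k b c))
  exact ⟨fcost_eq_abs_sub_snd (a := x i) (hord _) (by linarith),
    fcost_eq_abs_sub_snd (a := x i) (hord _) (by linarith)⟩

theorem fcost_relocate_collapse (hρ : 0 ≤ ρ) (happ : ApproxRatio F ρ)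
    (hij : i ≠ j) (hik : i ≠ k) (hjk : j ≠ k) (c : ℝ) :
    fcost c (F (relocate x j k (x i) c)) = 0 := by
  have hcost : scost (relocate x j k (x i) c) (F (relocate x j k (x i) c)) ≤ 0 :=
    calc _ ≤ ρ * optCost (relocate x j k (x i) c) := happ _
      _ ≤ ρ * |x i - x i| := mul_le_mul_of_nonneg_left (optCost_relocate_le_left hij hik hjk) hρ
      _ = 0 := by rw [sub_self, abs_zero, mul_zero]
  rw [scost_relocate hij hik hjk] at hcost
  have := fcost_nonneg (x i) (F (relocate x j k (x i) c))
  linarith [fcost_nonneg c (F (relocate x j k (x i) c))]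

theorem abs_sub_snd_relocate_le (hρ : 0 ≤ ρ) (hord : Ordered F) (hsp : Strategyproof F)
    (happ : ApproxRatio F ρ) (hij : i ≠ j) (hik : i ≠ k) (hjk : j ≠ k)
    (hs : WellSep ρ (relocate x j k b c) i j k) :
    |b - (F (relocate x j k b c)).2| ≤ c - b := by
  have hbc := ((wellSep_relocate_iff hij hik hjk).1 hs).2.1
  have hdev := hsp (relocate x j k b c) j (x i)
  rw [relocate_apply_left hjk, update_relocate_left hjk,
    (fcost_relocate_eq_abs hρ hord happ hij hik hjk hs).1] at hdev
  have := fcost_le_fcost_add_abs_sub b c (F (relocate x j k (x i) c))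
  rw [fcost_relocate_collapse hρ happ hij hik hjk, abs_sub_comm, abs_of_pos (sub_pos.2 hbc)] at this
  linarith

theorem snd_relocate_le (hρ : 0 ≤ ρ) (hord : Ordered F) (hsp : Strategyproof F)
    (happ : ApproxRatio F ρ) (hij : i ≠ j) (hik : i ≠ k) (hjk : j ≠ k)
    (hs : WellSep ρ (relocate x j k b c) i j k) : (F (relocate x j k b c)).2 ≤ c := by
  have := abs_sub_snd_relocate_le hρ hord hsp happ hij hik hjk hs
  linarith [neg_abs_le (b - (F (relocate x j k b c)).2)]

theorem le_snd_relocate (hρ : 0 ≤ ρ) (hord : Ordered F) (hsp : Strategyproof F)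
    (happ : ApproxRatio F ρ) (hij : i ≠ j) (hik : i ≠ k) (hjk : j ≠ k)
    (hs : WellSep ρ (relocate x j k b c) i j k) : b ≤ (F (relocate x j k b c)).2 := by
  have hbc := ((wellSep_relocate_iff hij hik hjk).1 hs).2.1
  set v := (F (relocate x j k b c)).2
  -- agent `k` could move to any `t ∈ (b, c]`, where the right facility is within `t - b` of `b`
  have hmove : ∀ t, b < t → t ≤ c → 2 * b - v ≤ t := by
    intro t hbt htc
    have hst := wellSep_relocate_of_le hρ hij hik hjk hs hbt htc
    have hdev := hsp (relocate x j k b c) k t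
    rw [relocate_apply_right, update_relocate_right,
      (fcost_relocate_eq_abs hρ hord happ hij hik hjk hs).2] at hdev
    have hlip := fcost_le_fcost_add_abs_sub c b (F (relocate x j k b t))
    rw [(fcost_relocate_eq_abs hρ hord happ hij hik hjk hst).1] at hlip
    have := abs_sub_snd_relocate_le hρ hord hsp happ hij hik hjk hst
    rw [abs_of_pos (sub_pos.2 hbc)] at hlip
    linarith [le_abs_self (c - v)]
  have : 2 * b - v ≤ b := le_of_forall_gt_imp_ge_of_dense fun t hbt =>
    (hmove (min t c) (lt_min hbt hbc) (min_le_right _ _)).trans (min_le_left _ _)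
  linarith

theorem snd_relocate_snd (hρ : 0 ≤ ρ) (hord : Ordered F) (hsp : Strategyproof F)
    (happ : ApproxRatio F ρ) (hij : i ≠ j) (hik : i ≠ k) (hjk : j ≠ k)
    (hs : WellSep ρ (relocate x j k b c) i j k) (hbv : b < (F (relocate x j k b c)).2) :
    (F (relocate x j k b (F (relocate x j k b c)).2)).2 = (F (relocate x j k b c)).2 := by
  set v := (F (relocate x j k b c)).2
  have hsv := wellSep_relocate_of_le hρ hij hik hjk hs hbv
    (snd_relocate_le hρ hord hsp happ hij hik hjk hs)
  have hdev := hsp (relocate x j k b v) k c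
  rw [relocate_apply_right, update_relocate_right,
    (fcost_relocate_eq_abs hρ hord happ hij hik hjk hsv).2] at hdev
  have : fcost v (F (relocate x j k b c)) ≤ |v - v| := min_le_right _ _
  rw [sub_self, abs_zero] at this
  exact (sub_eq_zero.1 (abs_nonpos_iff.1 (hdev.trans this))).symm

theorem abs_sub_snd_relocate_le_of_move_right (hρ : 0 ≤ ρ) (hord : Ordered F)
    (hsp : Strategyproof F) (happ : ApproxRatio F ρ) (hij : i ≠ j) (hik : i ≠ k) (hjk : j ≠ k)
    (hs : WellSep ρ (relocate x j k b c) i j k) (c' : ℝ) :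
    |c - (F (relocate x j k b c)).2| ≤ |c - (F (relocate x j k b c')).2| := by
  have hdev := hsp (relocate x j k b c) k c'
  rw [relocate_apply_right, update_relocate_right,
    (fcost_relocate_eq_abs hρ hord happ hij hik hjk hs).2] at hdev
  exact hdev.trans (min_le_right _ _)

theorem abs_sub_snd_relocate_le_of_move_left (hρ : 0 ≤ ρ) (hord : Ordered F)
    (hsp : Strategyproof F) (happ : ApproxRatio F ρ) (hij : i ≠ j) (hik : i ≠ k) (hjk : j ≠ k)
    (hs : WellSep ρ (relocate x j k b c) i j k) (b' : ℝ) :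
    |b - (F (relocate x j k b c)).2| ≤ |b - (F (relocate x j k b' c)).2| := by
  have hdev := hsp (relocate x j k b c) j b'
  rw [relocate_apply_left hjk, update_relocate_left hjk,
    (fcost_relocate_eq_abs hρ hord happ hij hik hjk hs).1] at hdev
  exact hdev.trans (min_le_right _ _)

theorem snd_relocate_eq_of_le (hρ : 0 ≤ ρ) (hord : Ordered F) (hsp : Strategyproof F)
    (happ : ApproxRatio F ρ) (hij : i ≠ j) (hik : i ≠ k) (hjk : j ≠ k)
    (hs : WellSep ρ (relocate x j k b c) i j k) (hpin : (F (relocate x j k b c)).2 = c)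
    {y : ℝ} (hby : b < y) (hyc : y ≤ c) : (F (relocate x j k b y)).2 = y := by
  have hst : ∀ t ∈ Ioc b c, WellSep ρ (relocate x j k b t) i j k := fun t ht =>
    wellSep_relocate_of_le hρ hij hik hjk hs ht.1 ht.2
  refine eq_self_on_Ioc_of_nearest (f := fun t => (F (relocate x j k b t)).2)
    (fun t ht => snd_relocate_le hρ hord hsp happ hij hik hjk (hst t ht))
    (fun t ht => abs_sub_snd_relocate_le_of_move_right hρ hord hsp happ hij hik hjk (hst t ht))
    (fun t ht => snd_relocate_snd hρ hord hsp happ hij hik hjk (hst t ht)) hpin y ⟨hby, hyc⟩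

theorem snd_relocate_eq_of_wellSep (hρ : 0 ≤ ρ) (hord : Ordered F) (hsp : Strategyproof F)
    (happ : ApproxRatio F ρ) (hij : i ≠ j) (hik : i ≠ k) (hjk : j ≠ k)
    (hs : WellSep ρ (relocate x j k b c) i j k) (hpin : (F (relocate x j k b c)).2 = c)
    {b' : ℝ} (hs' : WellSep ρ (relocate x j k b' c) i j k) :
    (F (relocate x j k b' c)).2 = c := by
  have hmem := fun {s : ℝ} => wellSep_relocate_iff_mem_Ioo (x := x) (b := s) (c := c) hρ hij hik hjk
  refine eq_on_Ioo_of_nearest (h := fun s => (F (relocate x j k s c)).2)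
    (fun s hs => le_snd_relocate hρ hord hsp happ hij hik hjk (hmem.2 hs))
    (fun s hs => snd_relocate_le hρ hord hsp happ hij hik hjk (hmem.2 hs))
    (fun t ht => abs_sub_snd_relocate_le_of_move_left hρ hord hsp happ hij hik hjk (hmem.2 ht))
    (hmem.1 hs) hpin b' (hmem.1 hs')

end Mechanism

def PinnedAt (F : (Fin 3 → ℝ) → ℝ × ℝ) (ρ : ℝ) (x : Fin 3 → ℝ) (i j k : Fin 3) (c : ℝ) : Prop :=
  ∃ b, WellSep ρ (relocate x j k b c) i j k ∧ (F (relocate x j k b c)).2 = c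

theorem PinnedAt.Ioc_subset {F : (Fin 3 → ℝ) → ℝ × ℝ} {ρ : ℝ} {x : Fin 3 → ℝ} {i j k : Fin 3}
    {z : ℝ} (hρ : 0 ≤ ρ) (hord : Ordered F) (hsp : Strategyproof F) (happ : ApproxRatio F ρ)
    (hij : i ≠ j) (hik : i ≠ k) (hjk : j ≠ k) (hz : PinnedAt F ρ x i j k z) :
    Ioc (x i + ρ / (ρ + 1) * (z - x i)) z ⊆ {y | PinnedAt F ρ x i j k y} := by
  intro y ⟨hβy, hyz⟩
  obtain ⟨b, hs, hpin⟩ := hz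
  set b' := (x i + ρ / (ρ + 1) * (z - x i) + y) / 2 with hb'
  have hs' : WellSep ρ (relocate x j k b' z) i j k :=
    (wellSep_relocate_iff_mem_Ioo hρ hij hik hjk).2 ⟨by linarith, by linarith⟩
  have hb'y : b' < y := by linarith
  exact ⟨b', wellSep_relocate_of_le hρ hij hik hjk hs' hb'y hyz,
    snd_relocate_eq_of_le hρ hord hsp happ hij hik hjk hs'
      (snd_relocate_eq_of_wellSep hρ hord hsp happ hij hik hjk hs hpin hs') hb'y hyz⟩

/-- Proposition `left_cover` (K = 2): if `x` is `(i|j,k)`-well-separated with the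
rightmost facility at `x_k`, then for every `(i|j,k)`-well-separated instance
obtained by replacing `x_j, x_k` with `x'_j, x'_k` where `x'_k ≤ x_k`, the
rightmost facility is at `x'_k`. -/
theorem left_cover (F : (Fin 3 → ℝ) → ℝ × ℝ) (ρ : ℝ) (hρ : 1 ≤ ρ)
    (hord : Ordered F) (hsp : Strategyproof F) (happ : ApproxRatio F ρ)
    (x : Fin 3 → ℝ) (i j k : Fin 3)
    (hij : i ≠ j) (hik : i ≠ k) (hjk : j ≠ k)
    (hws : WellSep ρ x i j k) (hF : (F x).2 = x k)
    (x'j x'k : ℝ)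
    (hws' : WellSep ρ (Function.update (Function.update x j x'j) k x'k) i j k)
    (hle : x'k ≤ x k) :
    (F (Function.update (Function.update x j x'j) k x'k)).2 = x'k := by
  have hρ0 : 0 ≤ ρ := by linarith
  have hpinned : Ioc (x i) (x k) ⊆ {y | PinnedAt F ρ x i j k y} :=
    Ioc_subset_of_forall_Ioc_subset (div_nonneg hρ0 (by linarith))
      ((div_lt_one (by linarith)).2 (by linarith))
      ⟨x j, by rwa [relocate_self], by rwa [relocate_self]⟩
      fun z hz => hz.Ioc_subset hρ0 hord hsp happ hij hik hjk
  have hx'k : x i < x'k := by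
    obtain ⟨h₁, h₂, -⟩ := (wellSep_relocate_iff hij hik hjk).1 hws'
    exact h₁.trans h₂
  obtain ⟨b, hs, hpin⟩ := hpinned ⟨hx'k, hle⟩
  exact snd_relocate_eq_of_wellSep hρ0 hord hsp happ hij hik hjk hs hpin hws'
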